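/- There exists a constant C > 0, independent of k, l, m, n, p and τ, such that for all p ∈ (0,1), τ > 0, integers n ≥ 1, m ∈ ℤ and k, l ∈ {0,…,N−1} (with N = 2^n), the residual ε_{mnkl} := (Ã_{m,n})_{kl} − ψ_m(θ_l) δ_{kl} satisfies |ε_{mnkl}| ≤ C τ |m| / N^{1−p} + (2|m|+1) e^{−τ|m|^p} / N. -/

import Mathlib

/-!
Since `o` maps `J_n` bijectively onto `{0,…,N-1}`, the phases in `Ã_{m,n}` run over all
`N`-th roots of unity, so `ψ_m(θ_l) δ_{kl}` is the same phase sum with every `c^{(n)}_{mj}`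
replaced by `q = e^{-τ|m|^p/2}`, and `|ε| ≤ N⁻¹ ∑_j |c^{(n)}_{mj} - q|`.
By subadditivity of `t ↦ t^p` both exponents are `≤ 0`, where `exp` is 1-Lipschitz, so a
summand with `m + j ∈ J_n` is at most `(τ/2)·||j|^p - |m+j|^p|`. This is at most `τ|m|^p/2`,
and by concavity at most `τ|m|·p|j|^{p-1}` once `|j| > 2|m|`; the latter sum to
`≤ 2τ|m|N^p`. For the at most `2|m|+1` indices with `m + j ∉ J_n` the summand is
`q ≤ e^{-τ|m|^p} + τ|m|^p/2`. The at most `min(6|m|, N)` indices of these two exceptional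
kinds thus contribute `τ|m|^p/2` each, which totals at most `3τ|m|N^p`.
-/

noncomputable section

namespace QECD

/-- The index set `J_n = {−N/2,…,−1,1,…,N/2}` with `N = 2^n`. -/
def Jn (n : ℕ) : Finset ℤ := (Finset.Icc (-(2 ^ (n - 1)) : ℤ) (2 ^ (n - 1))).erase 0

/-- The order-preserving enumeration `o : J_n → {0,…,N−1}`. -/
def oIdx (n : ℕ) (j : ℤ) : ℤ := if j < 0 then j + 2 ^ (n - 1) else j + 2 ^ (n - 1) - 1

/-- Scaled Fourier basis function `ψ_m(θ) = e^{−τ|m|^p/2} e^{imθ}`. -/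
def psi (p τ : ℝ) (m : ℤ) (θ : ℝ) : ℂ :=
  (Real.exp (-(τ * |(m : ℝ)| ^ p) / 2) : ℂ) * Complex.exp (Complex.I * (m : ℂ) * (θ : ℂ))

/-- Structure constants `c_{mj} = e^{−τ(|m|^p + |j|^p − |m+j|^p)/2}`. -/
def cst (p τ : ℝ) (m j : ℤ) : ℝ :=
  Real.exp (-(τ * (|(m : ℝ)| ^ p + |(j : ℝ)| ^ p - |((m + j : ℤ) : ℝ)| ^ p)) / 2)

/-- Truncated structure constants `c^{(n)}_{mj}`. -/
def cstN (p τ : ℝ) (n : ℕ) (m j : ℤ) : ℝ :=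
  if m + j ∈ Jn n then cst p τ m j else 0

/-- Matrix elements `(Ã_{m,n})_{kl}` of the QFT-rotated multiplication operator. -/
def Atilde (p τ : ℝ) (n : ℕ) (m : ℤ) (k l : ℕ) : ℂ :=
  (1 / (2 ^ n : ℂ)) * ∑ j ∈ Jn n,
    Complex.exp (2 * (Real.pi : ℂ) * Complex.I *
        ((((k : ℤ) - (l : ℤ)) * oIdx n j + (k : ℤ) * m : ℤ) : ℂ) / (2 ^ n : ℂ)) *
      (cstN p τ n m j : ℂ)

end QECD

open Finset

namespace Real

lemma abs_exp_sub_exp_le_of_nonpos {a b : ℝ} (ha : a ≤ 0) (hb : b ≤ 0) :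
    |exp a - exp b| ≤ |a - b| := by
  wlog hab : a ≤ b generalizing a b
  · rw [abs_sub_comm, abs_sub_comm a]
    exact this hb ha (le_of_not_ge hab)
  have hexp : exp a = exp b * exp (a - b) := by rw [← exp_add, add_sub_cancel]
  have hgap : 1 - exp (a - b) ≤ b - a := by linarith [add_one_le_exp (a - b)]
  rw [abs_of_nonpos (by linarith [exp_le_exp.2 hab]), abs_of_nonpos (by linarith), hexp]
  nlinarith [exp_pos b, exp_le_one_iff.2 hb]

lemma exp_neg_half_le {x : ℝ} (hx : 0 ≤ x) : exp (-x / 2) ≤ exp (-x) + x / 2 := by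
  have h := abs_exp_sub_exp_le_of_nonpos (a := -x / 2) (b := -x) (by linarith) (by linarith)
  rw [show -x / 2 - -x = x / 2 by ring, abs_of_nonneg (show 0 ≤ x / 2 by linarith)] at h
  linarith [le_abs_self (exp (-x / 2) - exp (-x))]

lemma rpow_le_rpow_add_mul_sub {p x y : ℝ} (hp0 : 0 ≤ p) (hp1 : p ≤ 1) (hx : 0 < x)
    (hy : 0 ≤ y) : y ^ p ≤ x ^ p + p * x ^ (p - 1) * (y - x) := by
  have hs : -1 ≤ y / x - 1 := by linarith [div_nonneg hy hx.le]
  have hbern := rpow_one_add_le_one_add_mul_self hs hp0 hp1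
  rw [add_sub_cancel, div_rpow hy hx.le, div_le_iff₀ (rpow_pos_of_pos hx p)] at hbern
  rw [rpow_sub_one hx.ne']
  calc y ^ p ≤ (1 + p * (y / x - 1)) * x ^ p := hbern
    _ = x ^ p + p * (x ^ p / x) * (y - x) := by field_simp

lemma abs_rpow_sub_rpow_le {p a b : ℝ} (hp0 : 0 ≤ p) (hp1 : p ≤ 1) (ha : 0 < a) (hb : 0 < b) :
    |a ^ p - b ^ p| ≤ p * min a b ^ (p - 1) * |a - b| := by
  wlog hab : a ≤ b generalizing a b
  · rw [abs_sub_comm, abs_sub_comm a, min_comm]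
    exact this hb ha (le_of_not_ge hab)
  rw [abs_of_nonpos (by linarith [rpow_le_rpow ha.le hab hp0]), abs_of_nonpos (by linarith),
    min_eq_left hab]
  linarith [rpow_le_rpow_add_mul_sub hp0 hp1 ha hb.le]

lemma abs_rpow_abs_sub_rpow_abs_add_le {p : ℝ} (hp0 : 0 ≤ p) (hp1 : p ≤ 1) (x y : ℝ) :
    |(|y| ^ p - |x + y| ^ p)| ≤ |x| ^ p := by
  have hsub : ∀ a b : ℝ, |a + b| ^ p ≤ |a| ^ p + |b| ^ p := fun a b =>
    (rpow_le_rpow (abs_nonneg _) (abs_add_le a b) hp0).trans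
      (rpow_add_le_add_rpow (abs_nonneg a) (abs_nonneg b) hp0 hp1)
  have h1 := hsub x y
  have h2 := hsub (-x) (x + y)
  rw [neg_add_cancel_left, abs_neg] at h2
  rw [abs_sub_le_iff]
  constructor <;> linarith

lemma abs_rpow_abs_sub_rpow_abs_add_le_of_two_mul_lt {p x y : ℝ} (hp0 : 0 ≤ p) (hp1 : p ≤ 1)
    (hxy : 2 * |x| < |y|) : |(|y| ^ p - |x + y| ^ p)| ≤ 2 * |x| * (p * |y| ^ (p - 1)) := by
  have hdist : |(|y| - |x + y|)| ≤ |x| := by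
    simpa using abs_abs_sub_abs_le_abs_sub y (x + y)
  have hmin : |y| / 2 ≤ min |y| |x + y| :=
    le_min (by linarith [abs_nonneg x]) (by linarith [abs_le.1 hdist])
  have hy : 0 < |y| / 2 := by linarith [abs_nonneg x]
  have hhalf : (|y| / 2) ^ (p - 1) ≤ 2 * |y| ^ (p - 1) := by
    rw [div_eq_inv_mul, mul_rpow (by norm_num) (abs_nonneg y)]
    gcongr
    calc (2⁻¹ : ℝ) ^ (p - 1) ≤ 2⁻¹ ^ (-1 : ℝ) :=
          rpow_le_rpow_of_exponent_ge (by norm_num) (by norm_num) (by linarith)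
      _ = 2 := by norm_num
  calc |(|y| ^ p - |x + y| ^ p)|
      ≤ p * min |y| |x + y| ^ (p - 1) * |(|y| - |x + y|)| :=
        abs_rpow_sub_rpow_le hp0 hp1 (by linarith) (hy.trans_le (hmin.trans (min_le_right _ _)))
    _ ≤ p * (2 * |y| ^ (p - 1)) * |x| := by
        gcongr
        exact (rpow_le_rpow_of_nonpos hy hmin (by linarith)).trans hhalf
    _ = 2 * |x| * (p * |y| ^ (p - 1)) := by ring

lemma sum_range_mul_rpow_le {p : ℝ} (hp0 : 0 ≤ p) (hp1 : p ≤ 1) (K : ℕ) :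
    ∑ r ∈ range K, p * ((r : ℝ) + 1) ^ (p - 1) ≤ (K : ℝ) ^ p := by
  calc ∑ r ∈ range K, p * ((r : ℝ) + 1) ^ (p - 1)
      ≤ ∑ r ∈ range K, (((r + 1 : ℕ) : ℝ) ^ p - (r : ℝ) ^ p) := by
        gcongr with r
        push_cast
        linarith [rpow_le_rpow_add_mul_sub hp0 hp1 (by positivity : (0 : ℝ) < r + 1) r.cast_nonneg]
    _ ≤ (K : ℝ) ^ p := by
        rw [sum_range_sub (fun r : ℕ => (r : ℝ) ^ p), Nat.cast_zero]
        linarith [zero_rpow_nonneg p]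

lemma mul_rpow_le_mul_mul_rpow {p A c M N : ℝ} (hp0 : 0 ≤ p) (hp1 : p ≤ 1) (hA : 0 ≤ A)
    (hAM : A ≤ c * M) (hAN : A ≤ N) (hc : 1 ≤ c) (hM : 0 ≤ M) :
    A * M ^ p ≤ c * M * N ^ p := by
  rcases le_or_gt M N with hMN | hNM
  · gcongr
  have hM0 : 0 < M := (hA.trans hAN).trans_lt hNM
  have hratio : N / M ≤ (N / M) ^ p := by
    simpa using rpow_le_rpow_of_exponent_ge' (div_nonneg (hA.trans hAN) hM0.le)
      ((div_le_one hM0).2 hNM.le) hp0 hp1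
  rw [div_rpow (hA.trans hAN) hM0.le, div_le_div_iff₀ hM0 (rpow_pos_of_pos hM0 p)] at hratio
  calc A * M ^ p ≤ N * M ^ p := by gcongr
    _ ≤ N ^ p * M := hratio
    _ ≤ c * M * N ^ p := by
        nlinarith [mul_nonneg (mul_nonneg (sub_nonneg.2 hc) hM) (rpow_nonneg (hA.trans hAN) p)]

end Real

lemma IsPrimitiveRoot.sum_range_zpow_mul {K : Type*} [Field K] {ζ : K} {N : ℕ}
    (hζ : IsPrimitiveRoot ζ N) (d : ℤ) :
    ∑ r ∈ range N, ζ ^ (d * r) = if (N : ℤ) ∣ d then (N : K) else 0 := by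
  simp_rw [zpow_mul, zpow_natCast]
  split_ifs with hd
  · simp [(hζ.zpow_eq_one_iff_dvd d).2 hd]
  · have hpow : (ζ ^ d) ^ N = 1 := by
      rw [← zpow_natCast, ← zpow_mul, hζ.zpow_eq_one_iff_dvd]
      exact dvd_mul_left _ _
    rw [geom_sum_eq (mt (hζ.zpow_eq_one_iff_dvd d).1 hd), hpow, sub_self, zero_div]

lemma Complex.exp_two_pi_I_mul_int_div (N : ℂ) (a : ℤ) :
    exp (2 * Real.pi * I * a / N) = exp (2 * Real.pi * I / N) ^ a := by
  rw [← exp_int_mul]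
  ring_nf

namespace QECD

open Complex

lemma mem_Jn {n : ℕ} {j : ℤ} : j ∈ Jn n ↔ j ≠ 0 ∧ -2 ^ (n - 1) ≤ j ∧ j ≤ 2 ^ (n - 1) := by
  simp [Jn]

lemma Jn_eq_image_union_image (n : ℕ) :
    Jn n = (range (2 ^ (n - 1))).image (fun r : ℕ => -((r : ℤ) + 1)) ∪
      (range (2 ^ (n - 1))).image (fun r : ℕ => (r : ℤ) + 1) := by
  ext j
  simp only [mem_Jn, mem_union, mem_image, mem_range]
  have hM : ((2 ^ (n - 1) : ℕ) : ℤ) = 2 ^ (n - 1) := by push_cast; rfl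
  constructor
  · rintro ⟨hj0, hjl, hju⟩
    rcases hj0.lt_or_gt with hj | hj
    · exact Or.inl ⟨(-j - 1).toNat, by omega, by omega⟩
    · exact Or.inr ⟨(j - 1).toNat, by omega, by omega⟩
  · rintro (⟨r, hr, rfl⟩ | ⟨r, hr, rfl⟩) <;> omega

lemma sum_Jn_eq_sum_range {M : Type*} [AddCommMonoid M] (n : ℕ) (f : ℤ → M) :
    ∑ j ∈ Jn n, f j = ∑ r ∈ range (2 ^ (n - 1)), (f (-((r : ℤ) + 1)) + f ((r : ℤ) + 1)) := by
  rw [Jn_eq_image_union_image, sum_union, sum_image, sum_image, sum_add_distrib]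
  · intro a _ b _ h; simpa using h
  · intro a _ b _ h; simpa using h
  · rw [disjoint_left]
    simp only [mem_image, mem_range]
    rintro _ ⟨a, _, rfl⟩ ⟨b, _, h⟩
    omega

lemma card_Jn {n : ℕ} (hn : 1 ≤ n) : #(Jn n) = 2 ^ n := by
  rw [card_eq_sum_ones, sum_Jn_eq_sum_range, sum_const, card_range, smul_eq_mul, ← pow_succ,
    Nat.sub_add_cancel hn]

lemma sum_Jn_mul_abs_rpow_le {p : ℝ} (hp0 : 0 ≤ p) (hp1 : p ≤ 1) (n : ℕ) :
    ∑ j ∈ Jn n, p * |(j : ℝ)| ^ (p - 1) ≤ 2 * (2 ^ n : ℝ) ^ p := by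
  have hterm : ∀ r : ℕ, p * |(((-((r : ℤ) + 1)) : ℤ) : ℝ)| ^ (p - 1)
      + p * |((((r : ℤ) + 1) : ℤ) : ℝ)| ^ (p - 1) = 2 * (p * ((r : ℝ) + 1) ^ (p - 1)) := by
    intro r
    push_cast
    rw [abs_neg, abs_of_pos (by positivity)]
    ring
  rw [sum_Jn_eq_sum_range, sum_congr rfl fun r _ => hterm r, ← mul_sum]
  gcongr
  calc ∑ r ∈ range (2 ^ (n - 1)), p * ((r : ℝ) + 1) ^ (p - 1)
      ≤ ((2 ^ (n - 1) : ℕ) : ℝ) ^ p := Real.sum_range_mul_rpow_le hp0 hp1 _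
    _ ≤ (2 ^ n : ℝ) ^ p := by
        gcongr
        push_cast
        exact pow_le_pow_right₀ (by norm_num) (Nat.sub_le n 1)

lemma card_filter_add_notMem_Jn_le (n : ℕ) (m : ℤ) :
    #{j ∈ Jn n | m + j ∉ Jn n} ≤ 2 * m.natAbs + 1 := by
  set M : ℤ := 2 ^ (n - 1)
  have hsub : {j ∈ Jn n | m + j ∉ Jn n} ⊆
      insert (-m) (Icc (-M) (-M + m.natAbs - 1) ∪ Icc (M - m.natAbs + 1) M) := by
    intro j
    simp only [mem_filter, mem_Jn, mem_insert, mem_union, mem_Icc]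
    omega
  refine (card_le_card hsub).trans ((card_insert_le _ _).trans ?_)
  have := card_union_le (Icc (-M) (-M + m.natAbs - 1)) (Icc (M - m.natAbs + 1) M)
  rw [Int.card_Icc, Int.card_Icc] at this
  omega

lemma card_filter_add_notMem_Jn_add_card_near_le (n : ℕ) (m : ℤ) :
    #{j ∈ Jn n | m + j ∉ Jn n} + #{j ∈ Jn n | m + j ∈ Jn n ∧ |j| ≤ 2 * |m|} ≤ 6 * m.natAbs := by
  set M : ℤ := 2 ^ (n - 1)
  rw [← card_union_of_disjoint (disjoint_filter.2 fun _ _ h h' => h h'.1)]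
  have hsub : {j ∈ Jn n | m + j ∉ Jn n} ∪ {j ∈ Jn n | m + j ∈ Jn n ∧ |j| ≤ 2 * |m|} ⊆
      (Icc (-M) (-M + m.natAbs - 1) ∪ Icc (M - m.natAbs + 1) M
        ∪ Icc (-2 * m.natAbs : ℤ) (2 * m.natAbs)).erase 0 := by
    intro j
    simp only [mem_union, mem_filter, mem_Jn, mem_erase, mem_Icc, Int.abs_eq_natAbs]
    omega
  refine (card_le_card hsub).trans ?_
  rw [card_erase_of_mem (by simp)]
  have h1 := card_union_le (Icc (-M) (-M + m.natAbs - 1) ∪ Icc (M - m.natAbs + 1) M)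
    (Icc (-2 * m.natAbs : ℤ) (2 * m.natAbs))
  have h2 := card_union_le (Icc (-M) (-M + m.natAbs - 1)) (Icc (M - m.natAbs + 1) M)
  rw [Int.card_Icc, Int.card_Icc] at h2
  rw [Int.card_Icc] at h1
  omega

lemma sum_Jn_oIdx {M : Type*} [AddCommMonoid M] {n : ℕ} (hn : 1 ≤ n) (g : ℤ → M) :
    ∑ j ∈ Jn n, g (oIdx n j) = ∑ r ∈ range (2 ^ n), g r := by
  have hN : ((2 ^ n : ℕ) : ℤ) = 2 * 2 ^ (n - 1) := by
    rw [Nat.cast_pow, Nat.cast_ofNat, ← pow_succ', Nat.sub_add_cancel hn]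
  refine sum_nbij' (fun j => (oIdx n j).toNat)
    (fun r => if (r : ℤ) < 2 ^ (n - 1) then r - 2 ^ (n - 1) else r - 2 ^ (n - 1) + 1)
    ?_ ?_ ?_ ?_ ?_
  · intro j hj; rw [mem_Jn] at hj; rw [mem_range, oIdx]; split_ifs <;> omega
  · intro r hr; rw [mem_range] at hr; rw [mem_Jn]; split_ifs <;> omega
  · intro j hj; rw [mem_Jn] at hj; simp only [oIdx]; split_ifs <;> omega
  · intro r hr; rw [mem_range] at hr; simp only [oIdx]; split_ifs <;> omega
  · intro j hj; rw [mem_Jn] at hj; rw [oIdx]; split_ifs <;> congr 1 <;> omega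

section StructureConstants

variable {p τ : ℝ} {n : ℕ} {m : ℤ}

lemma abs_cst_sub_le (hp0 : 0 ≤ p) (hp1 : p ≤ 1) (hτ : 0 ≤ τ) (j : ℤ) :
    |cst p τ m j - Real.exp (-(τ * |(m : ℝ)| ^ p) / 2)|
      ≤ τ / 2 * |(|(j : ℝ)| ^ p - |((m + j : ℤ) : ℝ)| ^ p)| := by
  have hu := Real.abs_rpow_abs_sub_rpow_abs_add_le hp0 hp1 (m : ℝ) j
  rw [← Int.cast_add] at hu
  have hexp : 0 ≤ τ * (|(m : ℝ)| ^ p + |(j : ℝ)| ^ p - |((m + j : ℤ) : ℝ)| ^ p) :=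
    mul_nonneg hτ (by linarith [(abs_le.1 hu).1])
  refine (Real.abs_exp_sub_exp_le_of_nonpos (by linarith) ?_).trans_eq ?_
  · have : 0 ≤ τ * |(m : ℝ)| ^ p := by positivity
    linarith
  · rw [show -(τ * (|(m : ℝ)| ^ p + |(j : ℝ)| ^ p - |((m + j : ℤ) : ℝ)| ^ p)) / 2
        - -(τ * |(m : ℝ)| ^ p) / 2 = -(τ / 2) * (|(j : ℝ)| ^ p - |((m + j : ℤ) : ℝ)| ^ p) by ring,
      abs_mul, abs_neg, abs_of_nonneg (by positivity)]

lemma sum_abs_cstN_sub_of_add_notMem_le (hτ : 0 ≤ τ) :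
    ∑ j ∈ Jn n with m + j ∉ Jn n, |cstN p τ n m j - Real.exp (-(τ * |(m : ℝ)| ^ p) / 2)|
      ≤ #{j ∈ Jn n | m + j ∉ Jn n}
          * (Real.exp (-(τ * |(m : ℝ)| ^ p)) + τ * |(m : ℝ)| ^ p / 2) := by
  refine (sum_le_card_nsmul _ _ _ fun j hj => ?_).trans_eq (nsmul_eq_mul _ _)
  rw [cstN, if_neg (mem_filter.1 hj).2, zero_sub, abs_neg, abs_of_pos (Real.exp_pos _)]
  exact Real.exp_neg_half_le (by positivity)

lemma sum_abs_cstN_sub_near_le (hp0 : 0 ≤ p) (hp1 : p ≤ 1) (hτ : 0 ≤ τ) :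
    ∑ j ∈ Jn n with m + j ∈ Jn n ∧ |j| ≤ 2 * |m|,
        |cstN p τ n m j - Real.exp (-(τ * |(m : ℝ)| ^ p) / 2)|
      ≤ #{j ∈ Jn n | m + j ∈ Jn n ∧ |j| ≤ 2 * |m|} * (τ * |(m : ℝ)| ^ p / 2) := by
  refine (sum_le_card_nsmul _ _ _ fun j hj => ?_).trans_eq (nsmul_eq_mul _ _)
  rw [cstN, if_pos (mem_filter.1 hj).2.1]
  have hu := Real.abs_rpow_abs_sub_rpow_abs_add_le hp0 hp1 (m : ℝ) j
  rw [← Int.cast_add] at hu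
  calc _ ≤ τ / 2 * |(|(j : ℝ)| ^ p - |((m + j : ℤ) : ℝ)| ^ p)| := abs_cst_sub_le hp0 hp1 hτ j
    _ ≤ τ / 2 * |(m : ℝ)| ^ p := by gcongr
    _ = τ * |(m : ℝ)| ^ p / 2 := by ring

lemma abs_cstN_sub_le_of_two_mul_lt (hp0 : 0 ≤ p) (hp1 : p ≤ 1) (hτ : 0 ≤ τ) {j : ℤ}
    (hmj : m + j ∈ Jn n) (hfar : 2 * |m| < |j|) :
    |cstN p τ n m j - Real.exp (-(τ * |(m : ℝ)| ^ p) / 2)|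
      ≤ τ * |(m : ℝ)| * (p * |(j : ℝ)| ^ (p - 1)) := by
  have hfar' : 2 * |(m : ℝ)| < |(j : ℝ)| := by
    rw [← Int.cast_abs, ← Int.cast_abs]; exact_mod_cast hfar
  have hu := Real.abs_rpow_abs_sub_rpow_abs_add_le_of_two_mul_lt hp0 hp1 hfar'
  rw [← Int.cast_add] at hu
  rw [cstN, if_pos hmj]
  calc _ ≤ τ / 2 * |(|(j : ℝ)| ^ p - |((m + j : ℤ) : ℝ)| ^ p)| := abs_cst_sub_le hp0 hp1 hτ j
    _ ≤ τ / 2 * (2 * |(m : ℝ)| * (p * |(j : ℝ)| ^ (p - 1))) := by gcongr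
    _ = τ * |(m : ℝ)| * (p * |(j : ℝ)| ^ (p - 1)) := by ring

lemma sum_abs_cstN_sub_far_le (hp0 : 0 ≤ p) (hp1 : p ≤ 1) (hτ : 0 ≤ τ) :
    ∑ j ∈ Jn n with m + j ∈ Jn n ∧ ¬|j| ≤ 2 * |m|,
        |cstN p τ n m j - Real.exp (-(τ * |(m : ℝ)| ^ p) / 2)|
      ≤ 2 * τ * |(m : ℝ)| * (2 ^ n : ℝ) ^ p := by
  calc _ ≤ ∑ j ∈ Jn n with m + j ∈ Jn n ∧ ¬|j| ≤ 2 * |m|,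
        τ * |(m : ℝ)| * (p * |(j : ℝ)| ^ (p - 1)) := sum_le_sum fun j hj =>
          abs_cstN_sub_le_of_two_mul_lt hp0 hp1 hτ (mem_filter.1 hj).2.1
            (not_le.1 (mem_filter.1 hj).2.2)
    _ ≤ ∑ j ∈ Jn n, τ * |(m : ℝ)| * (p * |(j : ℝ)| ^ (p - 1)) :=
        sum_le_sum_of_subset_of_nonneg (filter_subset _ _) fun _ _ _ => by positivity
    _ ≤ τ * |(m : ℝ)| * (2 * (2 ^ n : ℝ) ^ p) := by
        rw [← mul_sum]
        gcongr
        exact sum_Jn_mul_abs_rpow_le hp0 hp1 n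
    _ = 2 * τ * |(m : ℝ)| * (2 ^ n : ℝ) ^ p := by ring

lemma sum_abs_cstN_sub_le (hp0 : 0 ≤ p) (hp1 : p ≤ 1) (hτ : 0 ≤ τ) (hn : 1 ≤ n) :
    ∑ j ∈ Jn n, |cstN p τ n m j - Real.exp (-(τ * |(m : ℝ)| ^ p) / 2)|
      ≤ 5 * τ * |(m : ℝ)| * (2 ^ n : ℝ) ^ p
        + (2 * |(m : ℝ)| + 1) * Real.exp (-(τ * |(m : ℝ)| ^ p)) := by
  set f : ℤ → ℝ := fun j => |cstN p τ n m j - Real.exp (-(τ * |(m : ℝ)| ^ p) / 2)|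
  set out := {j ∈ Jn n | m + j ∉ Jn n}
  set near := {j ∈ Jn n | m + j ∈ Jn n ∧ |j| ≤ 2 * |m|}
  have hsplit : ∑ j ∈ Jn n, f j = ∑ j ∈ out, f j + ∑ j ∈ near, f j
      + ∑ j ∈ Jn n with m + j ∈ Jn n ∧ ¬|j| ≤ 2 * |m|, f j := by
    rw [← sum_filter_add_sum_filter_not (Jn n) (fun j => m + j ∈ Jn n),
      ← sum_filter_add_sum_filter_not (filter _ (Jn n)) (fun j => |j| ≤ 2 * |m|),
      filter_filter, filter_filter]
    ring
  have hnatAbs : ((m.natAbs : ℕ) : ℝ) = |(m : ℝ)| := by rw [Nat.cast_natAbs, Int.cast_abs]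
  have hout : (#out : ℝ) ≤ 2 * |(m : ℝ)| + 1 := by
    rw [← hnatAbs]; exact_mod_cast card_filter_add_notMem_Jn_le n m
  have hcount : (#out + #near : ℝ) ≤ 6 * |(m : ℝ)| := by
    rw [← hnatAbs]; exact_mod_cast card_filter_add_notMem_Jn_add_card_near_le n m
  have hcard : #out + #near ≤ 2 ^ n := by
    rw [← card_union_of_disjoint (disjoint_filter.2 fun _ _ h h' => h h'.1), ← card_Jn hn]
    exact card_le_card (union_subset (filter_subset _ _) (filter_subset _ _))
  have hmix := Real.mul_rpow_le_mul_mul_rpow hp0 hp1 (by positivity) hcount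
    (show (#out + #near : ℝ) ≤ 2 ^ n by exact_mod_cast hcard)
    (by norm_num) (abs_nonneg (m : ℝ))
  have hexp := mul_le_mul_of_nonneg_right hout (Real.exp_pos (-(τ * |(m : ℝ)| ^ p))).le
  have hmixτ := mul_le_mul_of_nonneg_left hmix (by positivity : 0 ≤ τ / 2)
  rw [hsplit]
  linarith [sum_abs_cstN_sub_of_add_notMem_le (n := n) (m := m) (p := p) hτ,
    sum_abs_cstN_sub_near_le (n := n) (m := m) hp0 hp1 hτ,
    sum_abs_cstN_sub_far_le (n := n) (m := m) hp0 hp1 hτ]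

end StructureConstants

section Fourier

variable {n : ℕ} {k l : ℕ}

lemma isPrimitiveRoot_exp_two_pi_I_div_two_pow (n : ℕ) :
    IsPrimitiveRoot (exp (2 * Real.pi * I / 2 ^ n)) (2 ^ n) := by
  simpa using isPrimitiveRoot_exp (2 ^ n) (by positivity)

lemma sum_Jn_zpow (hn : 1 ≤ n) (hk : k < 2 ^ n) (hl : l < 2 ^ n) (m : ℤ) :
    ∑ j ∈ Jn n, exp (2 * Real.pi * I / 2 ^ n) ^ (((k : ℤ) - l) * oIdx n j + k * m)
      = if k = l then 2 ^ n * exp (2 * Real.pi * I / 2 ^ n) ^ ((k : ℤ) * m) else 0 := by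
  set ζ := exp (2 * Real.pi * I / 2 ^ n)
  have hζ := isPrimitiveRoot_exp_two_pi_I_div_two_pow n
  have hdvd : ((2 ^ n : ℕ) : ℤ) ∣ (k : ℤ) - l ↔ k = l := by
    refine ⟨fun h => ?_, fun h => by simp [h]⟩
    have hk' : (k : ℤ) < 2 ^ n := by exact_mod_cast hk
    have hl' : (l : ℤ) < 2 ^ n := by exact_mod_cast hl
    have := Int.eq_zero_of_abs_lt_dvd h (by rw [abs_lt, Nat.cast_pow, Nat.cast_ofNat]; omega)
    omega
  have hζ0 : ζ ≠ 0 := exp_ne_zero _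
  simp_rw [zpow_add₀ hζ0]
  rw [← sum_mul, sum_Jn_oIdx hn (fun t => ζ ^ (((k : ℤ) - l) * t)), hζ.sum_range_zpow_mul]
  simp only [hdvd]
  split_ifs <;> simp

lemma Atilde_eq (p τ : ℝ) (m : ℤ) :
    Atilde p τ n m k l = 1 / 2 ^ n * ∑ j ∈ Jn n,
      exp (2 * Real.pi * I / 2 ^ n) ^ (((k : ℤ) - l) * oIdx n j + k * m) * (cstN p τ n m j : ℂ) := by
  simp only [Atilde, exp_two_pi_I_mul_int_div]

lemma psi_mul_ite_eq (p τ : ℝ) (hn : 1 ≤ n) (hk : k < 2 ^ n) (hl : l < 2 ^ n) (m : ℤ) :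
    psi p τ m (2 * Real.pi * l / 2 ^ n) * (if k = l then 1 else 0) = 1 / 2 ^ n * ∑ j ∈ Jn n,
      exp (2 * Real.pi * I / 2 ^ n) ^ (((k : ℤ) - l) * oIdx n j + k * m)
        * (Real.exp (-(τ * |(m : ℝ)| ^ p) / 2) : ℂ) := by
  rw [← sum_mul, sum_Jn_zpow hn hk hl]
  split_ifs with hkl
  · subst hkl
    rw [psi, mul_one, ← exp_two_pi_I_mul_int_div]
    push_cast
    field_simp
  · simp

lemma norm_Atilde_sub_psi_le (p τ : ℝ) (hn : 1 ≤ n) (hk : k < 2 ^ n) (hl : l < 2 ^ n) (m : ℤ) :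
    ‖Atilde p τ n m k l - psi p τ m (2 * Real.pi * l / 2 ^ n) * (if k = l then 1 else 0)‖
      ≤ 1 / 2 ^ n * ∑ j ∈ Jn n, |cstN p τ n m j - Real.exp (-(τ * |(m : ℝ)| ^ p) / 2)| := by
  have hζ := (isPrimitiveRoot_exp_two_pi_I_div_two_pow n).norm'_eq_one (by positivity)
  rw [Atilde_eq, psi_mul_ite_eq p τ hn hk hl, ← mul_sub, ← sum_sub_distrib, norm_mul,
    show ‖(1 / 2 ^ n : ℂ)‖ = 1 / 2 ^ n by simp]
  gcongr
  refine (norm_sum_le _ _).trans_eq (sum_congr rfl fun j _ => ?_)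
  rw [← mul_sub, norm_mul, norm_zpow, hζ, one_zpow, one_mul, ← Complex.ofReal_sub,
    Complex.norm_real, Real.norm_eq_abs]

end Fourier

/-- There is a constant `C > 0`, independent of `k, l, m, n, p, τ`, such that
the residual `ε_{mnkl} = (Ã_{m,n})_{kl} − ψ_m(θ_l) δ_{kl}` satisfies
`|ε_{mnkl}| ≤ C τ |m| / N^{1−p} + (2|m|+1) e^{−τ|m|^p} / N`. -/
theorem residual_bound :
    ∃ C : ℝ, 0 < C ∧
      ∀ (p τ : ℝ), p ∈ Set.Ioo (0 : ℝ) 1 → 0 < τ →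
      ∀ (n : ℕ), 1 ≤ n → ∀ (m : ℤ) (k l : ℕ), k < 2 ^ n → l < 2 ^ n →
        ‖Atilde p τ n m k l
            - psi p τ m (2 * Real.pi * l / 2 ^ n) * (if k = l then 1 else 0)‖
          ≤ C * τ * |(m : ℝ)| / ((2 ^ n : ℝ)) ^ (1 - p)
            + (2 * |(m : ℝ)| + 1) * Real.exp (-(τ * |(m : ℝ)| ^ p)) / (2 ^ n : ℝ) := by
  refine ⟨5, by norm_num, fun p τ ⟨hp0, hp1⟩ hτ n hn m k l hk hl => ?_⟩
  calc _ ≤ 1 / 2 ^ n * ∑ j ∈ Jn n, |cstN p τ n m j - Real.exp (-(τ * |(m : ℝ)| ^ p) / 2)| :=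
        norm_Atilde_sub_psi_le p τ hn hk hl m
    _ ≤ 1 / 2 ^ n * (5 * τ * |(m : ℝ)| * (2 ^ n : ℝ) ^ p
        + (2 * |(m : ℝ)| + 1) * Real.exp (-(τ * |(m : ℝ)| ^ p))) := by
        gcongr
        exact sum_abs_cstN_sub_le hp0.le hp1.le hτ.le hn
    _ = _ := by
        rw [Real.rpow_sub (by positivity), Real.rpow_one]
        field_simp

end QECD
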